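/- arXiv:2402.19232 — 2 statements merged into one kernel-verified Lean document; each statement's English description precedes it below -/
import Mathlib

section
/- If the DRP instance I(φ) associated with a 3-SAT instance φ (with |L| ≥ 2 clauses over V variables) admits a feasible solution, then φ is satisfiable. -/
/-- A decision tree over `M` binary attributes: a finite rooted full binary tree
whose internal nodes carry attribute labels in `Fin M`. -/
inductive DTree (M : ℕ) : Type where
  | leaf : DTree M
  | node (f : Fin M) (l r : DTree M) : DTree M

namespace DTree

/-- The leaves of a decision tree, identified by their root-to-leaf paths
(`false` = left branch, i.e. attribute value 0; `true` = right branch, i.e. value 1). -/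
def leaves {M : ℕ} : DTree M → Finset (List Bool)
  | .leaf => {[]}
  | .node _ l r => (l.leaves.image (List.cons false)) ∪ (r.leaves.image (List.cons true))

/-- `Φ⁺(v)`: the attributes forced to value 1 on the root-to-`v` path. -/
def phiPos {M : ℕ} : DTree M → List Bool → Finset (Fin M)
  | .node f _ r, true :: p => insert f (r.phiPos p)
  | .node _ l _, false :: p => l.phiPos p
  | _, _ => ∅

/-- `Φ⁻(v)`: the attributes forced to value 0 on the root-to-`v` path. -/
def phiNeg {M : ℕ} : DTree M → List Bool → Finset (Fin M)
  | .node f l _, false :: p => insert f (l.phiNeg p)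
  | .node _ _ r, true :: p => r.phiNeg p
  | _, _ => ∅

end DTree

/-- A DRP (dataset reconstruction problem) instance: a finite forest of decision
trees over `M` binary attributes, counts `n_{t,v,c}` for every tree `t`, node `v`
(identified by its path) and class `c : C`, and a set `B ⊆ ℕ`. -/
structure DRP (C : Type) (N M : ℕ) where
  numTrees : ℕ
  tree : Fin numTrees → DTree M
  count : Fin numTrees → List Bool → C → ℕ
  B : Set ℕ

/-- Feasibility of a solution `(x, z, y)` of a DRP instance. -/
def IsFeasible {C : Type} [DecidableEq C] {N M : ℕ} (D : DRP C N M)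
    (x : Fin N → Fin M → Bool) (z : Fin N → C)
    (y : Fin D.numTrees → List Bool → Fin N → ℕ) : Prop :=
  (∀ t (k : Fin N), (∑ v ∈ (D.tree t).leaves, y t v k) ∈ D.B) ∧
  (∀ t, ∀ v ∈ (D.tree t).leaves, ∀ c : C,
      (∑ k ∈ Finset.univ.filter (fun k : Fin N => z k = c), y t v k) = D.count t v c) ∧
  (∀ t, ∀ v ∈ (D.tree t).leaves, ∀ k : Fin N, 0 < y t v k →
      (∀ i ∈ (D.tree t).phiPos v, x k i = true) ∧
      (∀ i ∈ (D.tree t).phiNeg v, x k i = false))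

/-- A literal over `V` boolean variables: a variable index together with a polarity
(`true` = the variable itself, `false` = its negation). -/
abbrev Lit (V : ℕ) := Fin V × Bool

/-- A 3-clause: a disjunction of three literals. -/
abbrev Clause3 (V : ℕ) := Lit V × Lit V × Lit V

/-- A 3-SAT instance over `V` variables: a finite list of 3-clauses. -/
abbrev CNF3 (V : ℕ) := List (Clause3 V)

def litSat {V : ℕ} (u : Fin V → Bool) (l : Lit V) : Prop := u l.1 = l.2

def clauseSat {V : ℕ} (u : Fin V → Bool) (cl : Clause3 V) : Prop :=
  litSat u cl.1 ∨ litSat u cl.2.1 ∨ litSat u cl.2.2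

/-- Satisfiability of a 3-SAT instance. -/
def Satisfiable {V : ℕ} (φ : CNF3 V) : Prop := ∃ u : Fin V → Bool, ∀ cl ∈ φ, clauseSat u cl

/-- Attribute `j ∈ {1,…,V}` among the `V + L` attributes of the construction. -/
def varAttr {V : ℕ} (L : ℕ) (j : Fin V) : Fin (V + L) := Fin.castAdd L j

/-- Attribute `V + l` among the `V + L` attributes of the construction. -/
def clauseAttr {V : ℕ} (L : ℕ) (l : Fin L) : Fin (V + L) := Fin.natAdd V l

/-- Perfect binary tree of depth 3 branching successively on attributes `a`, `b`, `c`. -/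
def perfect3 {M : ℕ} (a b c : Fin M) : DTree M :=
  .node a
    (.node b (.node c .leaf .leaf) (.node c .leaf .leaf))
    (.node b (.node c .leaf .leaf) (.node c .leaf .leaf))

/-- The tree associated with clause `l`: the root branches on attribute `V + l`, its left
child is a leaf, and its right subtree is a perfect binary tree of depth 3 branching
successively on the three variables of the clause. -/
def clauseTree {V : ℕ} (L : ℕ) (l : Fin L) (cl : Clause3 V) : DTree (V + L) :=
  .node (clauseAttr L l) .leaf
    (perfect3 (varAttr L cl.1.1) (varAttr L cl.2.1.1) (varAttr L cl.2.2.1))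

/-- Counts for the tree of clause `cl`: the left leaf carries `6|L| - 6`; the eight leaves
of the perfect subtree correspond to the eight 0/1 assignments of the clause's variables
and carry 1 if the assignment satisfies the clause, 0 otherwise. -/
def clauseCount {V : ℕ} (L : ℕ) (cl : Clause3 V) : List Bool → ℕ
  | [false] => 6 * L - 6
  | [true, b1, b2, b3] =>
      if b1 = cl.1.2 ∨ b2 = cl.2.1.2 ∨ b3 = cl.2.2.2 then 1 else 0
  | _ => 0

/-- A right chain: each listed attribute gives an internal node on the rightmost path
whose left child is a leaf. -/
def rightChain {M : ℕ} : List (Fin M) → DTree M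
  | [] => .leaf
  | f :: fs => .node f .leaf (rightChain fs)

/-- The auxiliary tree: its right path has, at each depth `d ∈ {0,…,L-1}`, an internal
node branching on attribute `V + d + 1`. -/
def auxTree (V L : ℕ) : DTree (V + L) :=
  rightChain ((List.finRange L).map (clauseAttr L))

/-- Counts for the auxiliary tree: the left leaf at depth 1 carries `6L - 6`, the left
leaf at depth 2 carries `6`, the other left leaves carry `0`, and the rightmost leaf
(at depth `L`) carries `1`. -/
def auxCount (L : ℕ) (p : List Bool) : ℕ :=
  if p = [false] then 6 * L - 6
  else if p = [true, false] then 6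
  else if p = List.replicate L true then 1
  else 0

/-- The DRP instance `I(φ)` associated with a 3-SAT instance `φ`: a single class,
`N = 6|L| + 1` examples, `M = V + |L|` binary attributes, `B = {1}`, one tree per
clause plus the auxiliary tree. -/
def drpOf {V : ℕ} (φ : CNF3 V) : DRP Unit (6 * φ.length + 1) (V + φ.length) where
  numTrees := φ.length + 1
  tree := fun t =>
    if h : (t : ℕ) < φ.length then clauseTree φ.length ⟨t, h⟩ (φ.get ⟨t, h⟩)
    else auxTree V φ.length
  count := fun t p _ =>
    if h : (t : ℕ) < φ.length then clauseCount φ.length (φ.get ⟨t, h⟩) p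
    else auxCount φ.length p
  B := {1}

/-!
The rightmost leaf of the auxiliary tree has count 1, so some example `k` follows the path to it
and therefore has every clause attribute `V + l` set to 1. Since `B = {1}`, the example `k` sits
in some leaf of every clause tree; it cannot be the left leaf, so it is a leaf of the perfect
subtree, i.e. an assignment of the clause's three variables, and its positive count says that
this assignment satisfies the clause. Reading the variables off `x k` satisfies every clause.
-/

namespace DTree

variable {M : ℕ}

/-- Condition (iii) of feasibility: `x` takes the values forced on the root-to-`v` path. -/
def Agrees (t : DTree M) (v : List Bool) (x : Fin M → Bool) : Prop :=
  (∀ i ∈ t.phiPos v, x i = true) ∧ (∀ i ∈ t.phiNeg v, x i = false)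

theorem Agrees.of_node {f : Fin M} {l r : DTree M} {b : Bool} {p : List Bool}
    {x : Fin M → Bool} (h : (node f l r).Agrees (b :: p) x) :
    x f = b ∧ (cond b r l).Agrees p x := by
  cases b <;> simp_all [Agrees, phiPos, phiNeg]

theorem replicate_mem_leaves_rightChain (fs : List (Fin M)) :
    List.replicate fs.length true ∈ (rightChain fs).leaves := by
  induction fs with
  | nil => simp [rightChain, leaves]
  | cons f fs ih => simpa [rightChain, leaves, List.replicate_succ] using ih

theorem Agrees.eq_true_of_rightChain {fs : List (Fin M)} {x : Fin M → Bool}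
    (h : (rightChain fs).Agrees (List.replicate fs.length true) x) :
    ∀ f ∈ fs, x f = true := by
  induction fs with
  | nil => simp
  | cons g fs ih =>
    obtain ⟨hg, hfs⟩ := Agrees.of_node h
    simpa [hg] using ih hfs

theorem Agrees.of_perfect3 {a b c : Fin M} {b₁ b₂ b₃ : Bool} {x : Fin M → Bool}
    (h : (perfect3 a b c).Agrees [b₁, b₂, b₃] x) : x a = b₁ ∧ x b = b₂ ∧ x c = b₃ := by
  obtain ⟨ha, h⟩ := Agrees.of_node h
  rw [Bool.cond_self] at h
  obtain ⟨hb, h⟩ := Agrees.of_node h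
  rw [Bool.cond_self] at h
  exact ⟨ha, hb, (Agrees.of_node h).1⟩

end DTree

namespace IsFeasible

variable {C : Type} [DecidableEq C] {N M : ℕ} {D : DRP C N M} {x : Fin N → Fin M → Bool}
  {z : Fin N → C} {y : Fin D.numTrees → List Bool → Fin N → ℕ}

theorem agrees (h : IsFeasible D x z y) {t : Fin D.numTrees} {v : List Bool} {k : Fin N}
    (hv : v ∈ (D.tree t).leaves) (hk : 0 < y t v k) : (D.tree t).Agrees v (x k) :=
  h.2.2 t v hv k hk

theorem exists_pos_of_count_ne_zero (h : IsFeasible D x z y) {t : Fin D.numTrees}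
    {v : List Bool} {c : C} (hv : v ∈ (D.tree t).leaves) (hc : D.count t v c ≠ 0) :
    ∃ k, z k = c ∧ 0 < y t v k := by
  rw [← h.2.1 t v hv c] at hc
  obtain ⟨k, hk, hyk⟩ := Finset.exists_ne_zero_of_sum_ne_zero hc
  exact ⟨k, (Finset.mem_filter.mp hk).2, Nat.pos_of_ne_zero hyk⟩

theorem count_pos (h : IsFeasible D x z y) {t : Fin D.numTrees} {v : List Bool} {k : Fin N}
    (hv : v ∈ (D.tree t).leaves) (hk : 0 < y t v k) : 0 < D.count t v (z k) := by
  rw [← h.2.1 t v hv (z k)]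
  exact hk.trans_le (Finset.single_le_sum (fun _ _ => Nat.zero_le _) (by simp))

theorem exists_leaf_pos (h : IsFeasible D x z y) (hB : 0 ∉ D.B) (t : Fin D.numTrees)
    (k : Fin N) : ∃ v ∈ (D.tree t).leaves, 0 < y t v k := by
  have hsum : ∑ v ∈ (D.tree t).leaves, y t v k ≠ 0 := fun h0 => hB (h0 ▸ h.1 t k)
  obtain ⟨v, hv, hyv⟩ := Finset.exists_ne_zero_of_sum_ne_zero hsum
  exact ⟨v, hv, Nat.pos_of_ne_zero hyv⟩

end IsFeasible

section Reduction

variable {V : ℕ}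

theorem replicate_mem_leaves_auxTree (L : ℕ) :
    List.replicate L true ∈ (auxTree V L).leaves := by
  simpa [auxTree] using
    DTree.replicate_mem_leaves_rightChain ((List.finRange L).map (clauseAttr (V := V) L))

theorem DTree.Agrees.clauseAttr_eq_true_of_auxTree {L : ℕ} {x : Fin (V + L) → Bool}
    (h : (auxTree V L).Agrees (List.replicate L true) x) (l : Fin L) :
    x (clauseAttr L l) = true := by
  refine DTree.Agrees.eq_true_of_rightChain (fs := (List.finRange L).map (clauseAttr L))
    (by simpa [auxTree] using h) _ ?_
  simp

theorem auxCount_replicate_true (L : ℕ) : auxCount L (List.replicate L true) = 1 := by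
  rcases L with _ | _ | L <;> simp [auxCount, List.replicate_succ]

theorem mem_leaves_clauseTree {L : ℕ} {l : Fin L} {cl : Clause3 V} {v : List Bool}
    (hv : v ∈ (clauseTree L l cl).leaves) :
    v = [false] ∨ ∃ b₁ b₂ b₃, v = [true, b₁, b₂, b₃] := by
  simp only [clauseTree, perfect3, DTree.leaves, Finset.mem_union, Finset.mem_image,
    Finset.mem_singleton] at hv
  aesop

theorem clauseSat_of_agrees_clauseTree {L : ℕ} {l : Fin L} {cl : Clause3 V} {v : List Bool}
    {x : Fin (V + L) → Bool} (hv : v ∈ (clauseTree L l cl).leaves)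
    (hx : (clauseTree L l cl).Agrees v x) (hl : x (clauseAttr L l) = true)
    (hcount : clauseCount L cl v ≠ 0) : clauseSat (fun j => x (varAttr L j)) cl := by
  rcases mem_leaves_clauseTree hv with rfl | ⟨b₁, b₂, b₃, rfl⟩
  · simp [hx.of_node.1] at hl
  · obtain ⟨h₁, h₂, h₃⟩ := hx.of_node.2.of_perfect3
    have hsat : b₁ = cl.1.2 ∨ b₂ = cl.2.1.2 ∨ b₃ = cl.2.2.2 := by
      by_contra hc
      simp [clauseCount, hc] at hcount
    simpa only [clauseSat, litSat, h₁, h₂, h₃] using hsat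

theorem drpOf_tree_castSucc (φ : CNF3 V) (i : Fin φ.length) :
    (drpOf φ).tree i.castSucc = clauseTree φ.length i (φ.get i) := by
  simp [drpOf]

theorem drpOf_count_castSucc (φ : CNF3 V) (i : Fin φ.length) (p : List Bool) (c : Unit) :
    (drpOf φ).count i.castSucc p c = clauseCount φ.length (φ.get i) p := by
  simp [drpOf]

theorem drpOf_tree_last (φ : CNF3 V) : (drpOf φ).tree (Fin.last _) = auxTree V φ.length := by
  simp [drpOf]

theorem drpOf_count_last (φ : CNF3 V) (p : List Bool) (c : Unit) :
    (drpOf φ).count (Fin.last _) p c = auxCount φ.length p := by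
  simp [drpOf]

end Reduction

theorem satisfiable_of_drpOf_feasible_general {V : ℕ} (φ : CNF3 V)
    (x : Fin (6 * φ.length + 1) → Fin (V + φ.length) → Bool)
    (z : Fin (6 * φ.length + 1) → Unit)
    (y : Fin (drpOf φ).numTrees → List Bool → Fin (6 * φ.length + 1) → ℕ)
    (hfeas : IsFeasible (drpOf φ) x z y) :
    Satisfiable φ := by
  have haux := drpOf_tree_last φ ▸ replicate_mem_leaves_auxTree (V := V) φ.length
  obtain ⟨k, -, hk⟩ := hfeas.exists_pos_of_count_ne_zero haux (c := ())
    (by simp [drpOf_count_last, auxCount_replicate_true])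
  have hxk := (drpOf_tree_last φ ▸ hfeas.agrees haux hk).clauseAttr_eq_true_of_auxTree
  refine ⟨fun j => x k (varAttr φ.length j), fun cl hcl => ?_⟩
  obtain ⟨i, rfl⟩ := List.get_of_mem hcl
  obtain ⟨v, hv, hkv⟩ := hfeas.exists_leaf_pos (by simp [drpOf]) i.castSucc k
  have hcount := drpOf_count_castSucc φ i v (z k) ▸ hfeas.count_pos hv hkv
  exact clauseSat_of_agrees_clauseTree (drpOf_tree_castSucc φ i ▸ hv)
    (drpOf_tree_castSucc φ i ▸ hfeas.agrees hv hkv) (hxk i) hcount.ne'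

/-- If the DRP instance `I(φ)` associated with a 3-SAT instance `φ` (with `|L| ≥ 2`
clauses over `V` variables) admits a feasible solution, then `φ` is satisfiable. -/
theorem satisfiable_of_drpOf_feasible {V : ℕ} (φ : CNF3 V) (hL : 2 ≤ φ.length)
    (x : Fin (6 * φ.length + 1) → Fin (V + φ.length) → Bool)
    (z : Fin (6 * φ.length + 1) → Unit)
    (y : Fin (drpOf φ).numTrees → List Bool → Fin (6 * φ.length + 1) → ℕ)
    (hfeas : IsFeasible (drpOf φ) x z y) :
    Satisfiable φ :=
  satisfiable_of_drpOf_feasible_general φ x z y hfeas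
end

section
/- Let T be a finite rooted full binary tree. Suppose given λ_d ∈ {0,1} for every depth d at which T has internal nodes, and real numbers y_v ≥ 0 for all nodes v of T such that: y_root = 1; y_v = y_{l(v)} + y_{r(v)} for every internal node v; and for every depth d, Σ_{v internal at depth d} y_{l(v)} ≤ λ_d and Σ_{v internal at depth d} y_{r(v)} ≤ 1 − λ_d. Then y_v ∈ {0,1} for every node v, and exactly one leaf v of T has y_v = 1 (all other leaves have y_v = 0). -/
/-- A finite rooted full binary tree: every internal node has exactly two children. -/
inductive BTree : Type where
  | leaf : BTree
  | node (l r : BTree) : BTree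

namespace BTree

/-- All nodes of the tree, identified by their root-to-node paths
(`false` = left, `true` = right); the depth of a node is the length of its path. -/
def nodes : BTree → Finset (List Bool)
  | .leaf => {[]}
  | .node l r =>
      insert [] ((l.nodes.image (List.cons false)) ∪ (r.nodes.image (List.cons true)))

/-- The leaves of the tree, identified by their root-to-leaf paths. -/
def leaves : BTree → Finset (List Bool)
  | .leaf => {[]}
  | .node l r => (l.leaves.image (List.cons false)) ∪ (r.leaves.image (List.cons true))

/-- The subtree rooted at the node reached by path `p` (if any). -/
def subtree? : BTree → List Bool → Option BTree
  | T, [] => some T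
  | .node l _, false :: p => l.subtree? p
  | .node _ r, true :: p => r.subtree? p
  | .leaf, _ :: _ => none

/-- Whether the node of `T` at path `p` exists and is internal. -/
def internalAt (T : BTree) (p : List Bool) : Bool :=
  match T.subtree? p with
  | some (.node _ _) => true
  | _ => false

end BTree


theorem Finset.existsUnique_eq_one_of_sum_eq_one {α R : Type*} [Semiring R] [PartialOrder R]
    [IsStrictOrderedRing R] {s : Finset α} {f : α → R} (hf : ∀ x ∈ s, f x = 0 ∨ f x = 1)
    (hsum : ∑ x ∈ s, f x = 1) : ∃! x, x ∈ s ∧ f x = 1 := by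
  classical
  have hnonneg : ∀ x ∈ s, 0 ≤ f x := fun x hx => by rcases hf x hx with h | h <;> simp [h]
  obtain ⟨x, hx, hx1⟩ : ∃ x ∈ s, f x = 1 := by
    by_contra! hne
    rw [Finset.sum_eq_zero fun x hx => (hf x hx).resolve_right (hne x hx)] at hsum
    exact zero_ne_one hsum
  refine ⟨x, ⟨hx, hx1⟩, fun x' ⟨hx', hx'1⟩ => ?_⟩
  by_contra hne
  have : f x' + f x ≤ ∑ x ∈ s, f x := by
    rw [← Finset.sum_pair hne]
    exact Finset.sum_le_sum_of_subset_of_nonneg (by simp [Finset.insert_subset_iff, hx, hx'])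
      fun i hi _ => hnonneg i hi
  rw [hx1, hx'1, hsum] at this
  exact (lt_add_of_pos_right (1 : R) one_pos).not_ge this

theorem zero_or_one_of_add_le_of_zero_or_one {R : Type*} [CommRing R] [LinearOrder R]
    [IsStrictOrderedRing R] {a b lam : R} (ha : 0 ≤ a) (hb : 0 ≤ b) (hab : a + b = 0 ∨ a + b = 1)
    (hlam : lam = 0 ∨ lam = 1) (hal : a ≤ lam) (hbl : b ≤ 1 - lam) :
    (a = 0 ∨ a = 1) ∧ (b = 0 ∨ b = 1) := by
  rcases hab with hab | hab <;> rcases hlam with rfl | rfl <;>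
    constructor <;> first | (left; linarith) | (right; linarith)

namespace BTree

@[simp] lemma internalAt_leaf (p : List Bool) : leaf.internalAt p = false := by
  rcases p with _ | ⟨_ | _, _⟩ <;> rfl

@[simp] lemma internalAt_node_nil (l r : BTree) : (node l r).internalAt [] = true := rfl

@[simp] lemma internalAt_node_cons_false (l r : BTree) (p : List Bool) :
    (node l r).internalAt (false :: p) = l.internalAt p := rfl

@[simp] lemma internalAt_node_cons_true (l r : BTree) (p : List Bool) :
    (node l r).internalAt (true :: p) = r.internalAt p := rfl

@[simp] lemma nil_mem_nodes (T : BTree) : [] ∈ T.nodes := by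
  cases T <;> simp [nodes]

lemma mem_nodes_of_internalAt : ∀ {T : BTree} {p : List Bool}, T.internalAt p = true → p ∈ T.nodes
  | .leaf, _, h => by simp at h
  | .node _ _, [], _ => nil_mem_nodes _
  | .node _ _, false :: _, h => by simpa [nodes] using mem_nodes_of_internalAt (by simpa using h)
  | .node _ _, true :: _, h => by simpa [nodes] using mem_nodes_of_internalAt (by simpa using h)

lemma append_singleton_mem_nodes_iff :
    ∀ {T : BTree} {p : List Bool} {b : Bool}, p ++ [b] ∈ T.nodes ↔ T.internalAt p = true
  | .leaf, _, _ => by simp [nodes]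
  | .node _ _, [], b => by cases b <;> simp [nodes]
  | .node _ _, false :: _, _ => by simpa [nodes] using append_singleton_mem_nodes_iff
  | .node _ _, true :: _, _ => by simpa [nodes] using append_singleton_mem_nodes_iff

lemma leaves_subset_nodes : ∀ T : BTree, T.leaves ⊆ T.nodes
  | .leaf => subset_rfl
  | .node l r => by
    unfold leaves nodes
    exact (Finset.union_subset_union (Finset.image_subset_image (leaves_subset_nodes l))
      (Finset.image_subset_image (leaves_subset_nodes r))).trans (Finset.subset_insert _ _)

theorem sum_leaves_eq_root {M : Type*} [AddCommMonoid M] :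
    ∀ (T : BTree) (y : List Bool → M), (∀ p ∈ T.nodes, T.internalAt p = true →
      y p = y (p ++ [false]) + y (p ++ [true])) → ∑ p ∈ T.leaves, y p = y []
  | .leaf, _, _ => by simp [leaves]
  | .node l r, y, hflow => by
    have hl := sum_leaves_eq_root l (fun p => y (false :: p))
      fun p hp hint => hflow (false :: p) (by simp [nodes, hp]) hint
    have hr := sum_leaves_eq_root r (fun p => y (true :: p))
      fun p hp hint => hflow (true :: p) (by simp [nodes, hp]) hint
    have hdisj : Disjoint (l.leaves.image (List.cons false)) (r.leaves.image (List.cons true)) := by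
      simp [Finset.disjoint_left]
    rw [leaves, Finset.sum_union hdisj, Finset.sum_image (by simp), Finset.sum_image (by simp),
      hl, hr, hflow [] (nil_mem_nodes _) rfl]
    rfl

theorem flow_zero_or_one (T : BTree) (lam : ℕ → ℝ) (y : List Bool → ℝ)
    (hlam : ∀ d : ℕ, (∃ p ∈ T.nodes, p.length = d ∧ T.internalAt p = true) →
      lam d = 0 ∨ lam d = 1)
    (hnonneg : ∀ p ∈ T.nodes, 0 ≤ y p)
    (hroot : y [] = 1)
    (hflow : ∀ p ∈ T.nodes, T.internalAt p = true →
      y p = y (p ++ [false]) + y (p ++ [true]))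
    (hleft : ∀ d : ℕ,
      (∑ p ∈ T.nodes.filter (fun p => p.length = d ∧ T.internalAt p = true),
        y (p ++ [false])) ≤ lam d)
    (hright : ∀ d : ℕ,
      (∑ p ∈ T.nodes.filter (fun p => p.length = d ∧ T.internalAt p = true),
        y (p ++ [true])) ≤ 1 - lam d) :
    ∀ p ∈ T.nodes, y p = 0 ∨ y p = 1 := by
  intro p
  induction p using List.reverseRecOn with
  | nil => exact fun _ => Or.inr hroot
  | append_singleton p b ih =>
    intro hpb
    have hint : T.internalAt p = true := append_singleton_mem_nodes_iff.1 hpb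
    have hp : p ∈ T.nodes := mem_nodes_of_internalAt hint
    have hchild_le (c : Bool) : y (p ++ [c]) ≤ ∑ q ∈ T.nodes.filter
        (fun q => q.length = p.length ∧ T.internalAt q = true), y (q ++ [c]) :=
      Finset.single_le_sum (f := fun q => y (q ++ [c]))
        (fun q hq => hnonneg _ (append_singleton_mem_nodes_iff.2 (Finset.mem_filter.1 hq).2.2))
        (Finset.mem_filter.2 ⟨hp, rfl, hint⟩)
    have hsplit := zero_or_one_of_add_le_of_zero_or_one
      (hnonneg _ (append_singleton_mem_nodes_iff.2 hint))
      (hnonneg _ (append_singleton_mem_nodes_iff.2 hint))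
      (by rw [← hflow p hp hint]; exact ih hp) (hlam _ ⟨p, hp, rfl, hint⟩)
      ((hchild_le false).trans (hleft _)) ((hchild_le true).trans (hright _))
    cases b
    exacts [hsplit.1, hsplit.2]

end BTree

/-- Integrality of the MILP flow: if `λ_d ∈ {0,1}` at every depth `d` carrying internal
nodes, `y ≥ 0` on all nodes, `y(root) = 1`, `y(v) = y(l(v)) + y(r(v))` at every internal
node, and at each depth `d` the left (resp. right) children of internal nodes carry total
flow at most `λ_d` (resp. `1 - λ_d`), then `y` is 0/1 on every node and exactly one leaf
carries `y = 1` (all other leaves carry `y = 0`). -/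
theorem flow_integrality (T : BTree) (lam : ℕ → ℝ) (y : List Bool → ℝ)
    (hlam : ∀ d : ℕ, (∃ p ∈ T.nodes, p.length = d ∧ T.internalAt p = true) →
      lam d = 0 ∨ lam d = 1)
    (hnonneg : ∀ p ∈ T.nodes, 0 ≤ y p)
    (hroot : y [] = 1)
    (hflow : ∀ p ∈ T.nodes, T.internalAt p = true →
      y p = y (p ++ [false]) + y (p ++ [true]))
    (hleft : ∀ d : ℕ,
      (∑ p ∈ T.nodes.filter (fun p => p.length = d ∧ T.internalAt p = true),
        y (p ++ [false])) ≤ lam d)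
    (hright : ∀ d : ℕ,
      (∑ p ∈ T.nodes.filter (fun p => p.length = d ∧ T.internalAt p = true),
        y (p ++ [true])) ≤ 1 - lam d) :
    (∀ p ∈ T.nodes, y p = 0 ∨ y p = 1) ∧
    (∃! v : List Bool, v ∈ T.leaves ∧ y v = 1) := by
  have hbin := T.flow_zero_or_one lam y hlam hnonneg hroot hflow hleft hright
  refine ⟨hbin, Finset.existsUnique_eq_one_of_sum_eq_one
    (fun p hp => hbin p (T.leaves_subset_nodes hp)) ?_⟩
  rw [T.sum_leaves_eq_root y hflow, hroot]
end
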